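/- Modal characterisation (soundness direction): if P is concrete branching reactive bisimilar to Q, then for every formula φ in the class L^c_b, P ⊨ φ iff Q ⊨ φ; and if P is concrete branching X-bisimilar to Q then P ⊨_X φ iff Q ⊨_X φ for every φ in L^c_b. -/

import Mathlib

inductive Act (A : Type) where
  | vis (a : A)
  | tau
  | to

def TauPath {S A : Type} (Tr : S → Act A → S → Prop) : S → S → Prop :=
  Relation.ReflTransGen (fun p q => Tr p Act.tau q)

def OptStep {S A : Type} (Tr : S → Act A → S → Prop) (α : Act A) (p q : S) : Prop :=
  (α = Act.tau ∧ p = q) ∨ Tr p α q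

def Stable {S A : Type} (Tr : S → Act A → S → Prop) (p : S) : Prop :=
  ¬ ∃ p', Tr p Act.tau p'

def Idle {S A : Type} (Tr : S → Act A → S → Prop) (p : S) (X : Set A) : Prop :=
  Stable Tr p ∧ ∀ a ∈ X, ¬ ∃ p', Tr p (Act.vis a) p'

def InitSet {S A : Type} (Tr : S → Act A → S → Prop) (p : S) : Set (Act A) :=
  {α | α ≠ Act.to ∧ ∃ p', Tr p α p'}

structure CBRB {S A : Type} (Tr : S → Act A → S → Prop)
    (Rp : S → S → Prop) (Rt : S → Set A → S → Prop) : Prop where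
  symm_p : ∀ {P Q}, Rp P Q → Rp Q P
  symm_t : ∀ {P X Q}, Rt P X Q → Rt Q X P
  c1a : ∀ {P Q α P'}, Rp P Q → α ≠ Act.to → Tr P α P' →
    ∃ Q1 Q2, TauPath Tr Q Q1 ∧ OptStep Tr α Q1 Q2 ∧ Rp P Q1 ∧ Rp P' Q2
  c1b : ∀ {P Q} (Y : Set A), Rp P Q → Rt P Y Q
  c2a : ∀ {P X Q P'}, Rt P X Q → Tr P Act.tau P' →
    ∃ Q1 Q2, TauPath Tr Q Q1 ∧ OptStep Tr Act.tau Q1 Q2 ∧ Rt P X Q1 ∧ Rt P' X Q2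
  c2b : ∀ {P X Q a P'}, Rt P X Q → a ∈ X → Tr P (Act.vis a) P' →
    ∃ Q1 Q2, TauPath Tr Q Q1 ∧ Tr Q1 (Act.vis a) Q2 ∧ Rt P X Q1 ∧ Rp P' Q2
  c2c : ∀ {P X Q}, Rt P X Q → Idle Tr P X → ∃ Q0, TauPath Tr Q Q0 ∧ Rp P Q0
  c2d : ∀ {P X Q P'}, Rt P X Q → Idle Tr P X → Tr P Act.to P' →
    ∃ Q1 Q2, TauPath Tr Q Q1 ∧ Tr Q1 Act.to Q2 ∧ Rt P' X Q2
  c2e : ∀ {P X Q}, Rt P X Q → Stable Tr P → ∃ Q0, TauPath Tr Q Q0 ∧ Stable Tr Q0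

def Bis {S A : Type} (Tr : S → Act A → S → Prop) (P Q : S) : Prop :=
  ∃ Rp Rt, CBRB Tr Rp Rt ∧ Rp P Q

def BisX {S A : Type} (Tr : S → Act A → S → Prop) (P : S) (X : Set A) (Q : S) : Prop :=
  ∃ Rp Rt, CBRB Tr Rp Rt ∧ Rt P X Q

/-- Formulas of the class `L^c_b`: `⊤`, arbitrary conjunctions, negation,
`⟨ε⟩(φ ∧ ⟨α̂⟩φ')` for `α ∈ A ∪ {tau}` (with `none` standing for `tau`),
`⟨ε⟩⟨X⟩φ`, and `⟨ε⟩¬⟨tau⟩⊤`. -/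
inductive Fm (A : Type) : Type 1 where
  | top : Fm A
  | conj (I : Type) (f : I → Fm A) : Fm A
  | neg (φ : Fm A) : Fm A
  | dia (a : Option A) (φ φ' : Fm A) : Fm A
  | diaX (X : Set A) (φ : Fm A) : Fm A
  | stab : Fm A

/-- Satisfaction `P ⊨ φ` (environment `none`, i.e. a triggered environment) and
`P ⊨_Y φ` (environment `some Y`). -/
def Sat {C A : Type} (Tr : C → Act A → C → Prop) :
    Fm A → Option (Set A) → C → Prop
  | .top, _, _ => True
  | .conj _ f, e, P => ∀ i, Sat Tr (f i) e P
  | .neg φ, e, P => ¬ Sat Tr φ e P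
  | .dia none φ φ', e, P =>
      ∃ P1, TauPath Tr P P1 ∧ Sat Tr φ e P1 ∧
        (Sat Tr φ' e P1 ∨ ∃ P2, Tr P1 Act.tau P2 ∧ Sat Tr φ' e P2)
  | .dia (some a) φ φ', e, P =>
      ∃ P1 P2, TauPath Tr P P1 ∧ Sat Tr φ e P1 ∧
        (∀ Y ∈ e, a ∈ Y ∨ Idle Tr P1 Y) ∧
        Tr P1 (Act.vis a) P2 ∧ Sat Tr φ' none P2
  | .diaX X φ, e, P =>
      ∃ P1 P2, TauPath Tr P P1 ∧
        Idle Tr P1 (match e with | none => X | some Y => X ∪ Y) ∧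
        Tr P1 Act.to P2 ∧ Sat Tr φ (some X) P2
  | .stab, _, P => ∃ P0, TauPath Tr P P0 ∧ Stable Tr P0

/-!
Fix a concrete branching reactive bisimulation `(Rp, Rt)`. By induction on `φ` one shows at once
that `Sat Tr φ none` is preserved along `Rp` and `Sat Tr φ (some X)` along `Rt · X ·`; symmetry
of the bisimulation turns preservation into invariance, which handles negation. The crux is the
idle case: if `Rt P Y Q` and `P` is idle w.r.t. `Y`, then `Q` silently reaches a stable `Q0` with
`Rp P Q0` (clauses 2e, then 2c), and `Q0` refuses every visible action `P` refuses, since a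
visible step of `Q0` would be matched by `P` itself, `P` being stable (clause 1a).
-/

variable {C A : Type} {Tr : C → Act A → C → Prop}

theorem TauPath.eq_of_stable {p q : C} (hs : Stable Tr p) (hp : TauPath Tr p q) : q = p := by
  induction hp with
  | refl => rfl
  | tail _ hstep ih => exact absurd ⟨_, ih ▸ hstep⟩ hs

@[simp]
theorem optStep_vis {a : A} {p q : C} : OptStep Tr (.vis a) p q ↔ Tr p (.vis a) q := by
  simp [OptStep]

theorem Idle.mono {p : C} {X Y : Set A} (h : Idle Tr p Y) (hXY : X ⊆ Y) : Idle Tr p X :=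
  ⟨h.1, fun a ha => h.2 a (hXY ha)⟩

/-- The transfer condition for `τ`-steps common to clauses 1a and 2a. -/
def TauTransfer (Tr : C → Act A → C → Prop) (R : C → C → Prop) : Prop :=
  ∀ P Q P', R P Q → Tr P .tau P' →
    ∃ Q1 Q2, TauPath Tr Q Q1 ∧ OptStep Tr .tau Q1 Q2 ∧ R P Q1 ∧ R P' Q2

namespace TauTransfer

variable {R : C → C → Prop}

theorem exists_tauPath (hT : TauTransfer Tr R) {P Q P' : C} (hR : R P Q)
    (hp : TauPath Tr P P') : ∃ Q', TauPath Tr Q Q' ∧ R P' Q' := by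
  induction hp with
  | refl => exact ⟨Q, .refl, hR⟩
  | tail _ hstep ih =>
    obtain ⟨Q1, hQ1, hR1⟩ := ih
    obtain ⟨Q2, Q3, h2, ⟨-, rfl⟩ | h3, -, hR3⟩ := hT _ _ _ hR1 hstep
    · exact ⟨Q2, hQ1.trans h2, hR3⟩
    · exact ⟨Q3, (hQ1.trans h2).tail h3, hR3⟩

theorem sat_dia_none (hT : TauTransfer Tr R) {φ φ' : Fm A} {e : Option (Set A)}
    (hφ : ∀ P Q, R P Q → Sat Tr φ e P → Sat Tr φ e Q)
    (hφ' : ∀ P Q, R P Q → Sat Tr φ' e P → Sat Tr φ' e Q) {P Q : C} (hR : R P Q)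
    (hP : Sat Tr (.dia none φ φ') e P) : Sat Tr (.dia none φ φ') e Q := by
  obtain ⟨P1, hp, hφP, hφ'P⟩ := hP
  obtain ⟨Q1, hq, hR1⟩ := hT.exists_tauPath hR hp
  rcases hφ'P with hφ'P | ⟨P2, hstep, hφ'P⟩
  · exact ⟨Q1, hq, hφ _ _ hR1 hφP, .inl (hφ' _ _ hR1 hφ'P)⟩
  · obtain ⟨Q2, Q3, h2, ⟨-, rfl⟩ | h3, hR2, hR3⟩ := hT _ _ _ hR1 hstep
    · exact ⟨Q2, hq.trans h2, hφ _ _ hR2 hφP, .inl (hφ' _ _ hR3 hφ'P)⟩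
    · exact ⟨Q2, hq.trans h2, hφ _ _ hR2 hφP, .inr ⟨Q3, h3, hφ' _ _ hR3 hφ'P⟩⟩

end TauTransfer

def SatPreserved (Tr : C → Act A → C → Prop) (Rp : C → C → Prop) (Rt : C → Set A → C → Prop)
    (φ : Fm A) : Prop :=
  (∀ P Q, Rp P Q → Sat Tr φ none P → Sat Tr φ none Q) ∧
    ∀ P X Q, Rt P X Q → Sat Tr φ (some X) P → Sat Tr φ (some X) Q

namespace CBRB

variable {Rp : C → C → Prop} {Rt : C → Set A → C → Prop}

theorem tauTransfer_rp (h : CBRB Tr Rp Rt) : TauTransfer Tr Rp :=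
  fun _ _ _ hR hstep => h.c1a hR nofun hstep

theorem tauTransfer_rt (h : CBRB Tr Rp Rt) (X : Set A) : TauTransfer Tr (Rt · X ·) :=
  fun _ _ _ => h.c2a

theorem exists_vis_step (h : CBRB Tr Rp Rt) {P Q P' : C} {a : A} (hR : Rp P Q)
    (hstep : Tr P (.vis a) P') :
    ∃ Q1 Q2, TauPath Tr Q Q1 ∧ Tr Q1 (.vis a) Q2 ∧ Rp P Q1 ∧ Rp P' Q2 := by
  simpa using h.c1a hR (by simp) hstep

theorem exists_idle_of_rt (h : CBRB Tr Rp Rt) {P Q : C} {Y : Set A} (hR : Rt P Y Q)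
    (hI : Idle Tr P Y) :
    ∃ Q0, TauPath Tr Q Q0 ∧ Rp P Q0 ∧ ∀ Z, Idle Tr P Z → Idle Tr Q0 Z := by
  obtain ⟨Q0, hQ0, hs0⟩ := h.c2e hR hI.1
  have hR0 : Rt P Y Q0 := by
    obtain ⟨P', hp, hR'⟩ := (h.tauTransfer_rt Y).exists_tauPath (h.symm_t hR) hQ0
    exact h.symm_t (TauPath.eq_of_stable hI.1 hp ▸ hR')
  obtain ⟨Q1, hQ1, hRp⟩ := h.c2c hR0 hI
  obtain rfl := TauPath.eq_of_stable hs0 hQ1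
  refine ⟨Q1, hQ0, hRp, fun Z hZ => ⟨hs0, ?_⟩⟩
  rintro a ha ⟨q', hq'⟩
  obtain ⟨P1, P2, hp, hstep, -⟩ := h.exists_vis_step (h.symm_p hRp) hq'
  obtain rfl := TauPath.eq_of_stable hI.1 hp
  exact hZ.2 a ha ⟨P2, hstep⟩

theorem exists_timeout_step (h : CBRB Tr Rp Rt) {P Q P' : C} {X Y : Set A} (hR : Rt P Y Q)
    (hY : Idle Tr P Y) (hX : Idle Tr P X) (hstep : Tr P .to P') :
    ∃ Q0 Q', TauPath Tr Q Q0 ∧ (∀ Z, Idle Tr P Z → Idle Tr Q0 Z) ∧ Tr Q0 .to Q' ∧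
      Rt P' X Q' := by
  obtain ⟨Q0, hq0, hRp, hidle⟩ := h.exists_idle_of_rt hR hY
  obtain ⟨Q1, Q', hq1, hstep', hR'⟩ := h.c2d (h.c1b X hRp) hX hstep
  obtain rfl := TauPath.eq_of_stable (hidle Y hY).1 hq1
  exact ⟨Q1, Q', hq0, hidle, hstep', hR'⟩

theorem satPreserved_dia_none (h : CBRB Tr Rp Rt) {φ φ' : Fm A} (hφ : SatPreserved Tr Rp Rt φ)
    (hφ' : SatPreserved Tr Rp Rt φ') : SatPreserved Tr Rp Rt (.dia none φ φ') :=
  ⟨fun _ _ => h.tauTransfer_rp.sat_dia_none hφ.1 hφ'.1,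
    fun _ X _ => (h.tauTransfer_rt X).sat_dia_none (hφ.2 · X ·) (hφ'.2 · X ·)⟩

theorem satPreserved_dia_some (h : CBRB Tr Rp Rt) (a : A) {φ φ' : Fm A}
    (hφ : SatPreserved Tr Rp Rt φ) (hφ' : SatPreserved Tr Rp Rt φ') :
    SatPreserved Tr Rp Rt (.dia (some a) φ φ') := by
  constructor
  · rintro P Q hR ⟨P1, P2, hp, hφP, -, hstep, hφ'P⟩
    obtain ⟨Q1, hq, hR1⟩ := h.tauTransfer_rp.exists_tauPath hR hp
    obtain ⟨Q2, Q3, h2, h3, hR2, hR3⟩ := h.exists_vis_step hR1 hstep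
    exact ⟨Q2, Q3, hq.trans h2, hφ.1 _ _ hR2 hφP, nofun, h3, hφ'.1 _ _ hR3 hφ'P⟩
  · rintro P X Q hR ⟨P1, P2, hp, hφP, hside, hstep, hφ'P⟩
    obtain ⟨Q1, hq, hR1⟩ := (h.tauTransfer_rt X).exists_tauPath hR hp
    rcases hside X rfl with haX | hI
    · obtain ⟨Q2, Q3, h2, h3, hR2, hR3⟩ := h.c2b hR1 haX hstep
      exact ⟨Q2, Q3, hq.trans h2, hφ.2 _ _ _ hR2 hφP, by rintro _ ⟨⟩; exact .inl haX, h3,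
        hφ'.1 _ _ hR3 hφ'P⟩
    · obtain ⟨Q0, hq0, hRp, hidle⟩ := h.exists_idle_of_rt hR1 hI
      obtain ⟨Q2, Q3, h2, h3, -, hR3⟩ := h.exists_vis_step hRp hstep
      obtain rfl := TauPath.eq_of_stable (hidle X hI).1 h2
      exact ⟨Q2, Q3, hq.trans hq0, hφ.2 _ _ _ (h.c1b X hRp) hφP,
        by rintro _ ⟨⟩; exact .inr (hidle X hI), h3, hφ'.1 _ _ hR3 hφ'P⟩

theorem satPreserved_diaX (h : CBRB Tr Rp Rt) (X : Set A) {φ : Fm A}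
    (hφ : SatPreserved Tr Rp Rt φ) : SatPreserved Tr Rp Rt (.diaX X φ) := by
  constructor
  · rintro P Q hR ⟨P1, P2, hp, hI, hstep, hφP⟩
    obtain ⟨Q1, hq, hR1⟩ := h.tauTransfer_rp.exists_tauPath hR hp
    obtain ⟨Q0, Q3, hq0, hidle, h3, hR3⟩ := h.exists_timeout_step (h.c1b X hR1) hI hI hstep
    exact ⟨Q0, Q3, hq.trans hq0, hidle X hI, h3, hφ.2 _ _ _ hR3 hφP⟩
  · rintro P Y Q hR ⟨P1, P2, hp, hI, hstep, hφP⟩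
    obtain ⟨Q1, hq, hR1⟩ := (h.tauTransfer_rt Y).exists_tauPath hR hp
    obtain ⟨Q0, Q3, hq0, hidle, h3, hR3⟩ := h.exists_timeout_step hR1
      (hI.mono Set.subset_union_right) (hI.mono Set.subset_union_left) hstep
    exact ⟨Q0, Q3, hq.trans hq0, hidle _ hI, h3, hφ.2 _ _ _ hR3 hφP⟩

theorem satPreserved_stab (h : CBRB Tr Rp Rt) : SatPreserved Tr Rp Rt .stab := by
  constructor
  · rintro P Q hR ⟨P0, hp, hs⟩
    obtain ⟨Q1, hq, hR1⟩ := h.tauTransfer_rp.exists_tauPath hR hp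
    obtain ⟨Q0, hq0, hs0⟩ := h.c2e (h.c1b ∅ hR1) hs
    exact ⟨Q0, hq.trans hq0, hs0⟩
  · rintro P X Q hR ⟨P0, hp, hs⟩
    obtain ⟨Q1, hq, hR1⟩ := (h.tauTransfer_rt X).exists_tauPath hR hp
    obtain ⟨Q0, hq0, hs0⟩ := h.c2e hR1 hs
    exact ⟨Q0, hq.trans hq0, hs0⟩

theorem satPreserved (h : CBRB Tr Rp Rt) (φ : Fm A) : SatPreserved Tr Rp Rt φ := by
  induction φ with
  | top => exact ⟨fun _ _ _ _ => trivial, fun _ _ _ _ _ => trivial⟩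
  | conj I f ih => exact ⟨fun P Q hR hP i => (ih i).1 P Q hR (hP i),
      fun P X Q hR hP i => (ih i).2 P X Q hR (hP i)⟩
  | neg φ ih => exact ⟨fun P Q hR hP hQ => hP (ih.1 Q P (h.symm_p hR) hQ),
      fun P X Q hR hP hQ => hP (ih.2 Q X P (h.symm_t hR) hQ)⟩
  | dia a φ φ' ih ih' => cases a with
    | none => exact h.satPreserved_dia_none ih ih'
    | some a => exact h.satPreserved_dia_some a ih ih'
  | diaX X φ ih => exact h.satPreserved_diaX X ih
  | stab => exact h.satPreserved_stab

end CBRB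

/-- Modal characterisation, soundness direction: bisimilar processes satisfy the same
formulas of `L^c_b`. -/
theorem stmt15 {C A : Type} (Tr : C → Act A → C → Prop) :
    (∀ P Q : C, Bis Tr P Q → ∀ φ : Fm A, (Sat Tr φ none P ↔ Sat Tr φ none Q)) ∧
    (∀ (P : C) (X : Set A) (Q : C), BisX Tr P X Q →
      ∀ φ : Fm A, (Sat Tr φ (some X) P ↔ Sat Tr φ (some X) Q)) := by
  constructor
  · rintro P Q ⟨Rp, Rt, h, hR⟩ φ
    exact ⟨(h.satPreserved φ).1 P Q hR, (h.satPreserved φ).1 Q P (h.symm_p hR)⟩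
  · rintro P X Q ⟨Rp, Rt, h, hR⟩ φ
    exact ⟨(h.satPreserved φ).2 P X Q hR, (h.satPreserved φ).2 Q X P (h.symm_t hR)⟩
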